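/- There exist an approximately concave function f, a cache size k ≥ 2 with k+1 in the range of f, and a constant δ > 0 such that for every N there is a page request sequence of length at least N conforming to f on which the fault rate of the FIFO policy with cache size k (starting from an empty cache) is at least α_f(k) + δ; that is, FIFO's fault rate is bounded away from α_f(k) on arbitrarily long conforming sequences. -/
import Mathlib


/-- A page request sequence `σ` conforms to `f` if every window of `n` consecutive
requests contains requests for at most `f n` distinct pages. -/
def Conforms (f : ℕ → ℕ) (σ : List ℕ) : Prop :=
  ∀ w : List ℕ, w <:+: σ → w.toFinset.card ≤ f w.length

/-- `f` is approximately concave: `f 1 = 1`, `f 2 = 2`, `f (n+1) ∈ {f n, f n + 1}`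
for all `n ≥ 1`, and `m_y = |{n ≥ 1 : f n = y}|` is nondecreasing over attained values. -/
def ApproxConcave (f : ℕ → ℕ) : Prop :=
  f 1 = 1 ∧ f 2 = 2 ∧
    (∀ n, 1 ≤ n → f (n + 1) = f n ∨ f (n + 1) = f n + 1) ∧
    (∀ y z, (∃ n, 1 ≤ n ∧ f n = y) → (∃ n, 1 ≤ n ∧ f n = z) → y ≤ z →
      {n | 1 ≤ n ∧ f n = y}.encard ≤ {n | 1 ≤ n ∧ f n = z}.encard)

/-- `fInv f y` is the smallest `x ≥ 1` with `f x = y`. -/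
noncomputable def fInv (f : ℕ → ℕ) (y : ℕ) : ℕ := sInf {x | 1 ≤ x ∧ f x = y}

/-- `α_f(k) = (k - 1) / (f⁻¹(k+1) - 2)`. -/
noncomputable def alphaF (f : ℕ → ℕ) (k : ℕ) : ℝ :=
  ((k : ℝ) - 1) / ((fInv f (k + 1) : ℝ) - 2)

/-- One step of the FIFO policy with cache size `k`.  The cache is maintained as a queue
of (distinct) pages ordered by entry time (most recent entry first); a request for a
cached page leaves the queue unchanged, and on a fault the requested page enters at the
front, evicting the page that entered earliest (the last entry) if the cache overflows. -/
def fifoStep (k : ℕ) (Q : List ℕ) (p : ℕ) : List ℕ :=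
  if p ∈ Q then Q else (p :: Q).take k

/-- The number of faults of the FIFO policy with cache size `k` on a request sequence,
starting from the cache `Q`.  A request is a fault when the page is not in the cache. -/
def fifoFaults (k : ℕ) : List ℕ → List ℕ → ℕ
  | _, [] => 0
  | Q, p :: rest => (if p ∈ Q then 0 else 1) + fifoFaults k (fifoStep k Q p) rest

/-! Auxiliary -/

def myF : ℕ → ℕ := fun n => if n ≤ 1 then n else if n ≤ 4 then 2 else 3

def myP : List ℕ := [2,1,2,2,2,0,2,0,0,0,1,0,1,1,1]

def joinP (m : ℕ) : List ℕ := (List.replicate m myP).flatten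

lemma joinP_succ (m : ℕ) : joinP (m + 1) = myP ++ joinP m := by
  simp [joinP, List.replicate_succ]

lemma faults_append (k : ℕ) (Q l₁ l₂ : List ℕ) :
    fifoFaults k Q (l₁ ++ l₂) = fifoFaults k Q l₁ + fifoFaults k (l₁.foldl (fifoStep k) Q) l₂ := by
  induction l₁ generalizing Q with
  | nil => simp [fifoFaults]
  | cons p rest ih => simp [fifoFaults, ih, Nat.add_assoc]

lemma faults_joinP : ∀ m, fifoFaults 2 [0,1] (joinP m) = 6 * m := by
  intro m
  induction m with
  | zero => simp [joinP, fifoFaults]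
  | succ m ih =>
    rw [joinP_succ, faults_append]
    have h1 : fifoFaults 2 [0,1] myP = 6 := by decide
    have h2 : myP.foldl (fifoStep 2) [0,1] = [0,1] := by decide
    rw [h1, h2, ih]; ring

lemma length_joinP (m : ℕ) : (joinP m).length = 15 * m := by
  induction m with
  | zero => simp [joinP]
  | succ m ih => rw [joinP_succ]; simp [ih, myP]; ring

lemma take15_joinP (m : ℕ) : (joinP m).take 15 <+: myP := by
  cases m with
  | zero => simp [joinP]
  | succ m =>
    rw [joinP_succ]
    have hl : myP.length = 15 := rfl
    rw [← hl, List.take_left]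

lemma take30_joinP (m : ℕ) : (joinP m).take 30 <+: myP ++ myP := by
  cases m with
  | zero => simp [joinP]
  | succ m =>
    rw [joinP_succ]
    have hl : myP.length = 15 := by decide
    rw [List.take_append, hl]
    have : (30 : ℕ) - 15 = 15 := by norm_num
    rw [this]
    have h15 : myP.take 30 = myP := List.take_of_length_le (by rw [hl]; norm_num)
    rw [h15]
    obtain ⟨t, ht⟩ := take15_joinP m
    exact ⟨t, by rw [List.append_assoc, ht]⟩

/-- every short infix of `joinP m` is an infix of `myP ++ myP`. -/
lemma infix_doubled : ∀ m w, w <:+: joinP m → w.length ≤ 15 → w <:+: myP ++ myP := by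
  intro m
  induction m with
  | zero =>
    intro w hw _
    rw [joinP] at hw; simp at hw
    simp [hw]
  | succ m ih =>
    intro w hw hlen
    obtain ⟨s, t, hst⟩ := hw
    rcases le_or_gt 15 s.length with hs | hs
    · -- myP is a prefix of s, cancel it
      have hPpre : myP <+: joinP (m + 1) := by rw [joinP_succ]; exact List.prefix_append _ _
      have hspre : s <+: joinP (m + 1) := ⟨w ++ t, by simpa [List.append_assoc] using hst⟩
      have hPs : myP <+: s := by
        refine List.prefix_of_prefix_length_le hPpre hspre ?_
        simpa [myP] using hs
      obtain ⟨s', rfl⟩ := hPs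
      have h2 : myP ++ (s' ++ w ++ t) = myP ++ joinP m := by
        rw [← joinP_succ, ← hst]; simp [List.append_assoc]
      exact ih w ⟨s', t, List.append_cancel_left h2⟩ hlen
    · -- w lives in the first 30 entries
      have hsw : s ++ w <+: joinP (m + 1) := ⟨t, by simpa [List.append_assoc] using hst⟩
      have hswlen : (s ++ w).length ≤ 30 := by
        simp only [List.length_append]; omega
      have heq : s ++ w = ((joinP (m+1)).take 30).take (s ++ w).length := by
        rw [List.take_take, min_eq_left hswlen, ← List.prefix_iff_eq_take.mp hsw]
      have hsw2 : s ++ w <+: myP ++ myP := by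
        rw [heq]
        exact (List.take_prefix _ _).trans (take30_joinP (m+1))
      obtain ⟨t', ht'⟩ := hsw2
      exact ⟨s, t', by simpa [List.append_assoc] using ht'⟩

lemma window4 : ∀ i, (((myP ++ myP).drop i).take 4).toFinset.card ≤ 2 := by
  intro i
  rcases lt_or_ge i 30 with h | h
  · revert h; revert i; decide
  · have : (myP ++ myP).drop i = [] := List.drop_eq_nil_of_le (by simp [myP]; omega)
    simp [this]

lemma card_small (w : List ℕ) (hw : w <:+: myP ++ myP) (hlen : w.length ≤ 4) :
    w.toFinset.card ≤ 2 := by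
  obtain ⟨s, t, hst⟩ := hw
  have hdrop : (myP ++ myP).drop s.length = w ++ t := by
    rw [← hst]; simp [List.append_assoc]
  have hpre : w <+: (myP ++ myP).drop s.length := by rw [hdrop]; exact ⟨t, rfl⟩
  have heq : w = (((myP ++ myP).drop s.length).take 4).take w.length := by
    rw [List.take_take, min_eq_left hlen, ← List.prefix_iff_eq_take.mp hpre]
  have hsub : w ⊆ ((myP ++ myP).drop s.length).take 4 := by
    rw [heq]; exact (List.take_prefix _ _).subset
  have : w.toFinset ⊆ (((myP ++ myP).drop s.length).take 4).toFinset := fun x hx =>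
    List.mem_toFinset.2 (hsub (List.mem_toFinset.1 hx))
  exact le_trans (Finset.card_le_card this) (window4 s.length)

lemma conforms_joinP (m : ℕ) : Conforms myF (joinP m) := by
  intro w hw
  rcases le_or_gt w.length 4 with h4 | h4
  · rcases Nat.lt_or_ge w.length 2 with h1 | h1
    · -- length 0 or 1
      have hle : w.toFinset.card ≤ w.length := w.toFinset_card_le
      have : w.length = 0 ∨ w.length = 1 := by omega
      rcases this with h | h <;> rw [h] at hle ⊢ <;> simpa [myF] using hle
    · have := card_small w (infix_doubled m w hw (by omega)) h4
      have hf : myF w.length = 2 := by unfold myF; split_ifs <;> omega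
      omega
  · -- long windows: at most 3 distinct pages total
    have hsub : w.toFinset ⊆ ({0, 1, 2} : Finset ℕ) := by
      intro x hx
      have hxw : x ∈ w := List.mem_toFinset.1 hx
      have hxσ : x ∈ joinP m := hw.subset hxw
      have hxP : x ∈ myP := by
        rw [joinP, List.mem_flatten] at hxσ
        obtain ⟨l, hl, hxl⟩ := hxσ
        rwa [List.eq_of_mem_replicate hl] at hxl
      fin_cases hxP <;> simp
    have h3 : w.toFinset.card ≤ 3 := le_trans (Finset.card_le_card hsub) (by decide)
    have hf : myF w.length = 3 := by unfold myF; split_ifs <;> omega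
    omega

lemma approx_myF : ApproxConcave myF := by
  refine ⟨rfl, rfl, ?_, ?_⟩
  · intro n hn
    rcases le_or_gt n 4 with h | h
    · interval_cases n <;> simp [myF]
    · left; unfold myF; split_ifs <;> omega
  · intro y z hy hz hyz
    have hvals : ∀ v : ℕ, (∃ n, 1 ≤ n ∧ myF n = v) → v = 1 ∨ v = 2 ∨ v = 3 := by
      rintro v ⟨n, hn, hfn⟩
      unfold myF at hfn; split_ifs at hfn <;> omega
    have hS1 : {n | 1 ≤ n ∧ myF n = 1} = {1} := by
      ext n; simp only [Set.mem_setOf_eq, Set.mem_singleton_iff]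
      unfold myF; constructor
      · rintro ⟨h, hf⟩; split_ifs at hf <;> omega
      · rintro rfl; norm_num
    have hS2 : {n | 1 ≤ n ∧ myF n = 2} = {2, 3, 4} := by
      ext n
      simp only [Set.mem_setOf_eq, Set.mem_insert_iff, Set.mem_singleton_iff]
      unfold myF; constructor
      · rintro ⟨h, hf⟩; split_ifs at hf <;> omega
      · rintro (rfl | rfl | rfl) <;> norm_num
    have hS3 : {n | 1 ≤ n ∧ myF n = 3} = Set.Ici 5 := by
      ext n; simp only [Set.mem_setOf_eq, Set.mem_Ici]
      unfold myF; constructor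
      · rintro ⟨h, hf⟩; split_ifs at hf <;> omega
      · intro h; constructor
        · omega
        · split_ifs <;> omega
    have e1 : ({1} : Set ℕ).encard = 1 := Set.encard_singleton 1
    have e2 : ({2, 3, 4} : Set ℕ).encard = 3 := by
      rw [Set.encard_insert_of_notMem (by norm_num),
        Set.encard_insert_of_notMem (by norm_num), Set.encard_singleton]
      rfl
    have e3 : (Set.Ici 5 : Set ℕ).encard = ⊤ := (Set.Ici_infinite 5).encard_eq
    rcases hvals y hy with rfl | rfl | rfl <;> rcases hvals z hz with rfl | rfl | rfl <;>
      simp only [hS1, hS2, hS3, e1, e2, e3] <;>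
      first
        | exact le_refl _
        | exact le_top
        | exact (by norm_num : (1:ℕ∞) ≤ 3)
        | exact absurd hyz (by omega)

lemma fInv_myF : fInv myF 3 = 5 := by
  unfold fInv
  apply le_antisymm
  · exact Nat.sInf_le ⟨by norm_num, rfl⟩
  · refine le_csInf ⟨5, ⟨by norm_num, rfl⟩⟩ ?_
    rintro b ⟨hb1, hb2⟩
    unfold myF at hb2; split_ifs at hb2 <;> omega

/-- **Theorem 1.1(c)** There exist an approximately concave `f`, a cache size `k ≥ 2` with
`k+1` in the range of `f`, and a constant `δ > 0` such that there are arbitrarily long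
page request sequences conforming to `f` on which the fault rate of FIFO (from an empty
cache) is at least `α_f(k) + δ`. -/
theorem stmt2 :
    ∃ (f : ℕ → ℕ) (k : ℕ) (δ : ℝ), ApproxConcave f ∧ 2 ≤ k ∧
      (∃ n, 1 ≤ n ∧ f n = k + 1) ∧ 0 < δ ∧
      ∀ N : ℕ, ∃ σ : List ℕ, N ≤ σ.length ∧ Conforms f σ ∧
        (alphaF f k + δ) * (σ.length : ℝ) ≤ (fifoFaults k [] σ : ℝ) := by
  refine ⟨myF, 2, 1/15, approx_myF, le_refl 2, ⟨5, by norm_num, rfl⟩, by norm_num, ?_⟩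
  intro N
  refine ⟨joinP (N + 1), ?_, conforms_joinP (N + 1), ?_⟩
  · rw [length_joinP]; omega
  · have halpha : alphaF myF 2 = 1/3 := by
      unfold alphaF; rw [fInv_myF]; norm_num
    have hfaults : fifoFaults 2 [] (joinP (N + 1)) = 6 * (N + 1) := by
      rw [joinP_succ, faults_append]
      have h1 : fifoFaults 2 [] myP = 6 := by decide
      have h2 : myP.foldl (fifoStep 2) [] = [0,1] := by decide
      rw [h1, h2, faults_joinP]; ring
    rw [halpha, hfaults, length_joinP]
    push_cast
    apply le_of_eq
    ring
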